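/- Let (X, ≤) be a poset and {A_x : x ∈ X} an indexed family of bounded commutative integral residuated lattices each satisfying the divisibility identity x·(x → y) = x ∧ y. Then for all antichain labelings f, g ∈ ∏_{x∈X} A_x and all x ∈ X: f(x) · □(y ↦ f(y) → g(y))(x) = f(x) ∧ g(x). (This is the key divisibility computation showing that a poset product of GBL-algebras is again a GBL-algebra.) -/
import Mathlib


open Classical

/-- A bounded commutative integral residuated lattice. -/
class CIRL (A : Type*) extends Lattice A, CommMonoid A, OrderBot A, HImp A where
  mul_le_iff_le_himp : ∀ x y z : A, x * y ≤ z ↔ x ≤ y ⇨ z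
  le_one : ∀ x : A, x ≤ 1

/-- The operator `□` on the direct product `∏ x, A x`. -/
noncomputable def box {X : Type*} [PartialOrder X] {A : X → Type*} [∀ x, CIRL (A x)]
    (f : ∀ x, A x) : ∀ x, A x :=
  fun x => if ∀ y, x < y → f y = 1 then f x else ⊥

/-- `f` is an antichain labeling. -/
def IsACLabeling {X : Type*} [PartialOrder X] {A : X → Type*} [∀ x, CIRL (A x)]
    (f : ∀ x, A x) : Prop :=
  ∀ x y : X, x < y → f x = ⊥ ∨ f y = 1

lemma CIRL.mul_bot {A : Type*} [CIRL A] (a : A) : a * ⊥ = ⊥ := by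
  apply le_antisymm _ bot_le
  rw [mul_comm]
  exact (CIRL.mul_le_iff_le_himp ⊥ a ⊥).2 bot_le

lemma CIRL.himp_eq_one {A : Type*} [CIRL A] (a b : A) (h : a ≤ b) : a ⇨ b = 1 := by
  apply le_antisymm (CIRL.le_one _)
  have := (CIRL.mul_le_iff_le_himp 1 a b).1 (by simpa using h)
  exact this

/-- Divisibility in the poset product: if each factor satisfies the
divisibility identity `a · (a ⇨ b) = a ⊓ b`, then for all antichain labelings
`f, g` and all `x`, `f x · □(f ⇨ g) x = f x ⊓ g x`. -/
theorem posetProduct_divisibility {X : Type*} [PartialOrder X]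
    {A : X → Type*} [∀ x, CIRL (A x)]
    (hdiv : ∀ (x : X) (a b : A x), a * (a ⇨ b) = a ⊓ b)
    (f g : ∀ x, A x) (hf : IsACLabeling f) (hg : IsACLabeling g) :
    ∀ x : X, f x * box (fun y => f y ⇨ g y) x = f x ⊓ g x := by
  intro x
  unfold box
  by_cases hC : ∀ y, x < y → f y ⇨ g y = 1
  · rw [if_pos hC, hdiv]
  · rw [if_neg hC, CIRL.mul_bot]
    push_neg at hC
    obtain ⟨y, hxy, hne⟩ := hC
    by_cases hfx : f x = ⊥
    · rw [hfx]; simp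
    · have hfy : f y = 1 := (hf x y hxy).resolve_left hfx
      have hgx : g x = ⊥ := by
        rcases hg x y hxy with h | h
        · exact h
        · exact absurd (by rw [hfy, h]; exact CIRL.himp_eq_one 1 1 le_rfl) hne
      rw [hgx]; simp
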